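/- Define the relational structure 𝕊 with domain {0,1,2}³ and the following relations, where a = (a₁,a₂,a₃) and b = (b₁,b₂,b₃): unary relations U₀ = {(0,0,1)}, U₁ = {(1,0,1)}, U₂ = {(2,2,2)}, U₀₁ = {a : (a₂,a₃) ∈ ψ₂' and a₁ ∈ {0,1}}, U₀₂ = {a : (a₂,a₃) ∈ ψ₂ and a₁ = a₂}, U₁₂ = {a : (a₂,a₃) ∈ ψ₂ and a₁ = a₃}; binary relations Ψ₂'(a,b) ⟺ each of (a₁,b₁), (a₂,a₃), (a₂,b₃), (a₃,b₂), (b₂,b₃) lies in ψ₂'; Ψ₂(a,b) defined the same way with ψ₂ in place of ψ₂'; and ℳ₂(a,b) ⟺ (a₁,b₁), (a₁,a₂), (b₁,b₂) ∈ μ₂ and (a₂,a₃), (b₂,b₃) ∈ ψ₂. Define 𝕄₁'' with domain {0,1,2} and relations ψ₂, ψ₂', μ₂, {0,1}, {1,2}, {0,2}, {0}, {1}, {2}. Then 𝕊 and 𝕄₁'' are homomorphically equivalent (with Ψ₂ matched to ψ₂, Ψ₂' to ψ₂', ℳ₂ to μ₂, U₀₁ to {0,1}, U₁₂ to {1,2},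 U₀₂ to {0,2}, and U_i to {i}). (Since the relations of 𝕊 are primitive-positive definable over 𝕄₁ = ({0,1,2}; ψ₂, μ₂, {0},{1},{2}), this shows that 𝕄₁ pp-constructs 𝕄₁''.) -/
import Mathlib


/-- Triples over `{0,1,2}`: the domain of the pp-power `𝕊`. -/
abbrev A3 : Type := Fin 3 × Fin 3 × Fin 3

/-- The relation `ψ₂ = {(0,1),(1,0),(2,2)}` on `{0,1,2}`. -/
def psi2p (x y : Fin 3) : Prop :=
  (x, y) ∈ ({(0, 1), (1, 0), (2, 2)} : Set (Fin 3 × Fin 3))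

/-- The relation `ψ₂' = {(0,1),(1,0)}` on `{0,1,2}`. -/
def psi2p' (x y : Fin 3) : Prop :=
  (x, y) ∈ ({(0, 1), (1, 0)} : Set (Fin 3 × Fin 3))

/-- The equivalence relation `μ₂` on `{0,1,2}` with classes `{0,1}` and `{2}`. -/
def mu2p (x y : Fin 3) : Prop := x = y ∨ (x ≠ 2 ∧ y ≠ 2)

def sU0 : Set A3 := {(0, 0, 1)}
def sU1 : Set A3 := {(1, 0, 1)}
def sU2 : Set A3 := {(2, 2, 2)}

def sU01 : Set A3 := {a | psi2p' a.2.1 a.2.2 ∧ (a.1 = 0 ∨ a.1 = 1)}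
def sU02 : Set A3 := {a | psi2p a.2.1 a.2.2 ∧ a.1 = a.2.1}
def sU12 : Set A3 := {a | psi2p a.2.1 a.2.2 ∧ a.1 = a.2.2}

def sPsi2' (a b : A3) : Prop :=
  psi2p' a.1 b.1 ∧ psi2p' a.2.1 a.2.2 ∧ psi2p' a.2.1 b.2.2 ∧
    psi2p' a.2.2 b.2.1 ∧ psi2p' b.2.1 b.2.2

def sPsi2 (a b : A3) : Prop :=
  psi2p a.1 b.1 ∧ psi2p a.2.1 a.2.2 ∧ psi2p a.2.1 b.2.2 ∧
    psi2p a.2.2 b.2.1 ∧ psi2p b.2.1 b.2.2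

def sM2 (a b : A3) : Prop :=
  mu2p a.1 b.1 ∧ mu2p a.1 a.2.1 ∧ mu2p b.1 b.2.1 ∧
    psi2p a.2.1 a.2.2 ∧ psi2p b.2.1 b.2.2

instance (x y : Fin 3) : Decidable (psi2p x y) :=
  decidable_of_iff ((x, y) = (0, 1) ∨ (x, y) = (1, 0) ∨ (x, y) = (2, 2)) (by simp [psi2p])

instance (x y : Fin 3) : Decidable (psi2p' x y) :=
  decidable_of_iff ((x, y) = (0, 1) ∨ (x, y) = (1, 0)) (by simp [psi2p'])

instance (x y : Fin 3) : Decidable (mu2p x y) := by unfold mu2p; infer_instance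
instance (a b : A3) : Decidable (sPsi2 a b) := by unfold sPsi2; infer_instance
instance (a b : A3) : Decidable (sPsi2' a b) := by unfold sPsi2'; infer_instance
instance (a b : A3) : Decidable (sM2 a b) := by unfold sM2; infer_instance
instance (a : A3) : Decidable (a ∈ sU01) := by unfold sU01; exact instDecidableAnd
instance (a : A3) : Decidable (a ∈ sU02) := by unfold sU02; exact instDecidableAnd
instance (a : A3) : Decidable (a ∈ sU12) := by unfold sU12; exact instDecidableAnd
instance (a : A3) : Decidable (a ∈ sU0) :=
  decidable_of_iff (a = (0, 0, 1)) (by simp [sU0])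
instance (a : A3) : Decidable (a ∈ sU1) :=
  decidable_of_iff (a = (1, 0, 1)) (by simp [sU1])
instance (a : A3) : Decidable (a ∈ sU2) :=
  decidable_of_iff (a = (2, 2, 2)) (by simp [sU2])

def swap01 : Fin 3 → Fin 3
  | 0 => 1
  | 1 => 0
  | 2 => 2

def myDelta : Fin 3 → A3
  | 0 => (0, 0, 1)
  | 1 => (1, 0, 1)
  | 2 => (2, 2, 2)

def myNu (a : A3) : Fin 3 :=
  if a.2.1 = 2 then 2 else if a.2.1 = 0 then a.1 else swap01 a.1

/-- The structures `𝕊 = ({0,1,2}³; Ψ₂', Ψ₂, ℳ₂, U₀₁, U₀₂, U₁₂, U₀, U₁, U₂)` and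
`𝕄₁'' = ({0,1,2}; ψ₂, ψ₂', μ₂, {0,1}, {1,2}, {0,2}, {0}, {1}, {2})` are homomorphically
equivalent. -/
theorem stmt12 :
    (∃ δ : Fin 3 → A3,
      (∀ x y : Fin 3, psi2p x y → sPsi2 (δ x) (δ y)) ∧
      (∀ x y : Fin 3, psi2p' x y → sPsi2' (δ x) (δ y)) ∧
      (∀ x y : Fin 3, mu2p x y → sM2 (δ x) (δ y)) ∧
      (∀ x : Fin 3, (x = 0 ∨ x = 1) → δ x ∈ sU01) ∧
      (∀ x : Fin 3, (x = 1 ∨ x = 2) → δ x ∈ sU12) ∧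
      (∀ x : Fin 3, (x = 0 ∨ x = 2) → δ x ∈ sU02) ∧
      δ 0 ∈ sU0 ∧ δ 1 ∈ sU1 ∧ δ 2 ∈ sU2) ∧
    (∃ ν : A3 → Fin 3,
      (∀ a b : A3, sPsi2 a b → psi2p (ν a) (ν b)) ∧
      (∀ a b : A3, sPsi2' a b → psi2p' (ν a) (ν b)) ∧
      (∀ a b : A3, sM2 a b → mu2p (ν a) (ν b)) ∧
      (∀ a ∈ sU01, ν a = 0 ∨ ν a = 1) ∧
      (∀ a ∈ sU12, ν a = 1 ∨ ν a = 2) ∧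
      (∀ a ∈ sU02, ν a = 0 ∨ ν a = 2) ∧
      (∀ a ∈ sU0, ν a = 0) ∧ (∀ a ∈ sU1, ν a = 1) ∧ (∀ a ∈ sU2, ν a = 2)) := by
  constructor
  · exact ⟨myDelta, by decide, by decide, by decide, by decide, by decide, by decide,
      by decide, by decide, by decide⟩
  · exact ⟨myNu, by decide, by decide, by decide, by decide, by decide, by decide,
      by decide, by decide, by decide⟩
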